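/- Let u, v, t be distinct points with v ∈ C_u^i, t ∈ C_u^i, and ‖uv‖_hex ≤ ‖ut‖_hex (i.e., v ∈ ∇_u^t). If u ∈ C_t^j for some j ∈ ℤ/6, then v ∈ C_t^{j−1} ∪ C_t^j ∪ C_t^{j+1}. -/

import Mathlib

open Real

/-- Hexagonal norm: unit disk is the regular hexagon with east/west vertices (±1,0). -/
noncomputable def hexNorm (p : ℝ × ℝ) : ℝ :=
  max (2 * |p.2| / Real.sqrt 3) (max |p.1 + p.2 / Real.sqrt 3| |p.1 - p.2 / Real.sqrt 3|)

/-- Tipped hexagonal norm: unit disk is the regular hexagon with north/south vertices (0, ±2/√3). -/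
noncomputable def thexNorm (p : ℝ × ℝ) : ℝ :=
  max |p.1| (max (|p.1 + Real.sqrt 3 * p.2| / 2) (|p.1 - Real.sqrt 3 * p.2| / 2))

/-- Euclidean norm of a planar vector. -/
noncomputable def eucNorm (p : ℝ × ℝ) : ℝ := Real.sqrt (p.1 ^ 2 + p.2 ^ 2)

/-- Rotation of a planar vector by angle θ (counterclockwise). -/
noncomputable def rot (θ : ℝ) (p : ℝ × ℝ) : ℝ × ℝ :=
  (Real.cos θ * p.1 - Real.sin θ * p.2, Real.sin θ * p.1 + Real.cos θ * p.2)

/-- The cone of directions pointing straight down (spanning 60°), bounded by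
lines of slopes √3 and -√3 through the origin. -/
def cone0 : Set (ℝ × ℝ) := {v | v.2 ≤ 0 ∧ Real.sqrt 3 * |v.1| ≤ -v.2}

/-- Coordinates of q in the frame of the i-th cone of p (cone rotated back to cone0). -/
noncomputable def localCoord (p : ℝ × ℝ) (i : ZMod 6) (q : ℝ × ℝ) : ℝ × ℝ :=
  rot (-((i.val : ℝ) * (Real.pi / 3))) (q - p)

/-- The closed cone `C_p^i`: the six cones about p determined by the lines of
slopes -√3, 0, √3 through p, labeled counterclockwise with `C_p^0` directly below p. -/
def cone (p : ℝ × ℝ) (i : ZMod 6) : Set (ℝ × ℝ) :=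
  {q | localCoord p i q ∈ cone0}

/-- The triangle `∇_u^v`: points of the cone of u containing v whose hex-distance
to u is at most that of v. -/
def nabla (u v : ℝ × ℝ) : Set (ℝ × ℝ) :=
  {r | hexNorm (r - u) ≤ hexNorm (v - u) ∧ ∀ i : ZMod 6, v ∈ cone u i → r ∈ cone u i}

/-- Side length of an equilateral triangle with sides of slopes -√3, 0, √3,
realized as its diameter in the hexagonal norm. -/
noncomputable def sideLen (T : Set (ℝ × ℝ)) : ℝ :=
  sSup ((fun pq : (ℝ × ℝ) × (ℝ × ℝ) => hexNorm (pq.1 - pq.2)) '' (T ×ˢ T))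

/-- General position: no two points lie on a common line of slope -√3, 0 or √3. -/
def genPos (P : Finset (ℝ × ℝ)) : Prop :=
  ∀ p ∈ P, ∀ q ∈ P, p ≠ q →
    p.2 ≠ q.2 ∧ p.2 - q.2 ≠ Real.sqrt 3 * (p.1 - q.1) ∧
      p.2 - q.2 ≠ -(Real.sqrt 3) * (p.1 - q.1)

/-- Edge of the directed Theta-6 graph of P: from u to v exactly when the interior
of `∇_u^v` contains no point of P. -/
def isEdge (P : Finset (ℝ × ℝ)) (u v : ℝ × ℝ) : Prop :=
  u ∈ P ∧ v ∈ P ∧ u ≠ v ∧ ∀ p ∈ P, p ∉ interior (nabla u v)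

/-- A directed path in the Theta-6 graph of P from s to t, given as its list of vertices. -/
def isPath (P : Finset (ℝ × ℝ)) (ℓ : List (ℝ × ℝ)) (s t : ℝ × ℝ) : Prop :=
  ℓ ≠ [] ∧ ℓ.head? = some s ∧ ℓ.getLast? = some t ∧ ℓ.Chain' (isEdge P)

/-- Euclidean length of a path. -/
noncomputable def pathLen (ℓ : List (ℝ × ℝ)) : ℝ :=
  ((ℓ.zip ℓ.tail).map (fun pq => eucNorm (pq.2 - pq.1))).sum

/-!
Rotating by `localCoord u i` turns `C_u^i` into the downward cone `cone0`, in which the hexagonal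
norm of a point is `2/√3` times its depth, so in that frame `v` lies no deeper than `t`. The cones
`C_t^{j-1}, C_t^j, C_t^{j+1}` together make up the closed half-plane through `t` bounded by the line
perpendicular to the axis of `C_t^j`. In the frame of `C_t^j` membership in it is one linear
inequality, which for each of the six values of `j - i` follows from the depth comparison and
`u ∈ C_t^j`.
-/

local notation "ρ" => rot (-(π / 3))

lemma rot_rot (θ φ : ℝ) (w : ℝ × ℝ) : rot θ (rot φ w) = rot (θ + φ) w := by
  simp only [rot, cos_add, sin_add, Prod.mk.injEq]
  constructor <;> ring

lemma rot_sub_nat_mul_two_pi (θ : ℝ) (n : ℕ) : rot (θ - n * (2 * π)) = rot θ := by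
  ext w <;> simp [rot, cos_sub_nat_mul_two_pi, sin_sub_nat_mul_two_pi]

lemma rot_sub (θ : ℝ) (w z : ℝ × ℝ) : rot θ (w - z) = rot θ w - rot θ z := by
  simp only [rot, Prod.fst_sub, Prod.snd_sub, Prod.mk_sub_mk, Prod.mk.injEq]
  constructor <;> ring

lemma rho_apply (w : ℝ × ℝ) : ρ w = (w.1 / 2 + √3 / 2 * w.2, w.2 / 2 - √3 / 2 * w.1) := by
  simp only [rot, cos_neg, sin_neg, cos_pi_div_three, sin_pi_div_three, Prod.mk.injEq]
  constructor <;> ring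

-- In the coordinates `(√3 * x, y)` the rotation `ρ` has rational coefficients, so the cone
-- conditions on its iterates become linear arithmetic.
lemma rho_snd (w : ℝ × ℝ) : (ρ w).2 = (w.2 - √3 * w.1) / 2 := by
  rw [rho_apply]; ring

lemma sqrt_three_mul_rho_fst (w : ℝ × ℝ) : √3 * (ρ w).1 = (√3 * w.1 + 3 * w.2) / 2 := by
  rw [rho_apply]
  linear_combination (w.2 / 2) * Real.mul_self_sqrt (show (0 : ℝ) ≤ 3 by norm_num)

lemma mem_cone0_iff (w : ℝ × ℝ) : w ∈ cone0 ↔ w.2 ≤ √3 * w.1 ∧ w.2 ≤ -(√3 * w.1) := by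
  have habs : √3 * |w.1| = |√3 * w.1| := by
    rw [abs_mul, abs_of_pos (show (0 : ℝ) < √3 by positivity)]
  simp only [cone0, Set.mem_ofPred_eq, habs, abs_le]
  constructor
  · rintro ⟨-, h₁, h₂⟩; constructor <;> linarith
  · rintro ⟨h₁, h₂⟩; refine ⟨?_, ?_, ?_⟩ <;> linarith

lemma hexNorm_rho (w : ℝ × ℝ) : hexNorm (ρ w) = hexNorm w := by
  have hs : (0 : ℝ) < √3 := by positivity
  have h3 : √3 * √3 = 3 := Real.mul_self_sqrt (by norm_num)
  have two_abs_div (x : ℝ) : 2 * |x| / √3 = |2 * x / √3| := by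
    rw [abs_div, abs_mul, abs_two, abs_of_pos hs]
  have e₁ : 2 * (ρ w).2 / √3 = -(w.1 - w.2 / √3) := by
    rw [rho_apply]; field_simp; ring
  have e₂ : (ρ w).1 + (ρ w).2 / √3 = 2 * w.2 / √3 := by
    rw [rho_apply]; field_simp; linear_combination w.2 * h3
  have e₃ : (ρ w).1 - (ρ w).2 / √3 = w.1 + w.2 / √3 := by
    rw [rho_apply]; field_simp; linear_combination w.2 * h3
  rw [hexNorm, hexNorm, two_abs_div, e₁, abs_neg, e₂, e₃, ← two_abs_div, max_comm, max_assoc]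

lemma hexNorm_of_mem_cone0 {w : ℝ × ℝ} (hw : w ∈ cone0) : hexNorm w = -(2 * w.2 / √3) := by
  obtain ⟨hy, hx⟩ := hw
  have hs : (0 : ℝ) < √3 := by positivity
  have hx' : |w.1| ≤ -(w.2 / √3) := by
    rw [← neg_div, le_div_iff₀ hs]; linarith [mul_comm √3 |w.1|]
  have hA : 2 * |w.2| / √3 = -(2 * w.2 / √3) := by rw [abs_of_nonpos hy]; ring
  have hB : 2 * w.2 / √3 = 2 * (w.2 / √3) := by ring
  obtain ⟨hx₁, hx₂⟩ := abs_le.mp hx'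
  rw [hexNorm, hA]
  apply max_eq_left
  apply max_le <;> rw [abs_le] <;> constructor <;> linarith

lemma snd_le_snd_of_hexNorm_le {a b : ℝ × ℝ} (ha : a ∈ cone0) (hb : b ∈ cone0)
    (h : hexNorm a ≤ hexNorm b) : b.2 ≤ a.2 := by
  rw [hexNorm_of_mem_cone0 ha, hexNorm_of_mem_cone0 hb, neg_le_neg_iff,
    div_le_div_iff_of_pos_right (by positivity)] at h
  linarith

lemma localCoord_add_one (p : ℝ × ℝ) (k : ZMod 6) (q : ℝ × ℝ) :
    localCoord p (k + 1) q = ρ (localCoord p k q) := by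
  have hval : k.val + 1 = (k + 1).val + 6 * ((k.val + 1) / 6) := by
    rw [ZMod.val_add, show (1 : ZMod 6).val = 1 from rfl]; omega
  have hangle : -(π / 3) + -(k.val * (π / 3)) =
      -((k + 1).val * (π / 3)) - ((k.val + 1) / 6 : ℕ) * (2 * π) := by
    have := congrArg (fun n : ℕ => (n : ℝ)) hval
    push_cast at this
    linear_combination (-(π / 3)) * this
  rw [localCoord, localCoord, rot_rot, hangle, rot_sub_nat_mul_two_pi]

lemma localCoord_add_natCast (p : ℝ × ℝ) (k : ZMod 6) (n : ℕ) (q : ℝ × ℝ) :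
    localCoord p (k + n) q = ρ^[n] (localCoord p k q) := by
  induction n with
  | zero => simp
  | succ n ih =>
    rw [Nat.cast_succ, ← add_assoc, localCoord_add_one, ih, Function.iterate_succ_apply']

lemma localCoord_add (p : ℝ × ℝ) (k l : ZMod 6) (q : ℝ × ℝ) :
    localCoord p (k + l) q = ρ^[l.val] (localCoord p k q) := by
  rw [← localCoord_add_natCast, ZMod.natCast_zmod_val]

lemma localCoord_sub_localCoord (p r : ℝ × ℝ) (k : ZMod 6) (q : ℝ × ℝ) :
    localCoord p k q - localCoord p k r = localCoord r k q := by
  rw [localCoord, localCoord, localCoord, ← rot_sub, sub_sub_sub_cancel_right]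

lemma hexNorm_localCoord (p : ℝ × ℝ) (k : ZMod 6) (q : ℝ × ℝ) :
    hexNorm (localCoord p k q) = hexNorm (q - p) := by
  have h0 : localCoord p 0 q = q - p := by ext <;> simp [localCoord, rot]
  rw [← zero_add k, localCoord_add, h0]
  induction k.val with
  | zero => rfl
  | succ n ih => rw [Function.iterate_succ_apply', hexNorm_rho, ih]

lemma mem_cone0_or_of_rho_snd_nonpos {z : ℝ × ℝ} (hz : (ρ z).2 ≤ 0) :
    z ∈ cone0 ∨ ρ z ∈ cone0 ∨ ρ (ρ z) ∈ cone0 := by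
  simp only [mem_cone0_iff, rho_snd, sqrt_three_mul_rho_fst] at hz ⊢
  rcases le_total z.2 0 with hy | hy
  · rcases le_total z.2 (-(√3 * z.1)) with hx | hx
    · left; constructor <;> linarith
    · right; left; constructor <;> linarith
  · right; right; constructor <;> linarith

lemma mem_adjacent_cones_of_localCoord_snd_nonpos {p q : ℝ × ℝ} {k : ZMod 6}
    (h : (localCoord p k q).2 ≤ 0) : q ∈ cone p (k - 1) ∪ cone p k ∪ cone p (k + 1) := by
  have hk : localCoord p k q = ρ (localCoord p (k - 1) q) := by
    rw [← localCoord_add_one, sub_add_cancel]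
  rw [hk] at h
  have := mem_cone0_or_of_rho_snd_nonpos h
  simp only [Set.mem_union, cone, Set.mem_ofPred_eq, hk, localCoord_add_one]
  tauto

lemma snd_iterate_rho_sub_nonpos {a b : ℝ × ℝ} (ha : a ∈ cone0) (hb : b ∈ cone0)
    (hab : b.2 ≤ a.2) {n : ℕ} (hn : n < 6) (hnb : ρ^[n] (-b) ∈ cone0) :
    (ρ^[n] (a - b)).2 ≤ 0 := by
  rw [mem_cone0_iff] at ha hb
  interval_cases n <;>
    simp only [Function.iterate_succ_apply', Function.iterate_zero_apply, mem_cone0_iff, rho_snd,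
      sqrt_three_mul_rho_fst, Prod.fst_sub, Prod.snd_sub, Prod.fst_neg, Prod.snd_neg, mul_sub,
      mul_neg] at hnb ⊢ <;>
    linarith

theorem stmt17_general (u v t : ℝ × ℝ) (i j : ZMod 6)
    (hv : v ∈ cone u i) (ht : t ∈ cone u i)
    (hle : hexNorm (v - u) ≤ hexNorm (t - u))
    (hu : u ∈ cone t j) :
    v ∈ cone t (j - 1) ∪ cone t j ∪ cone t (j + 1) := by
  have frame (q : ℝ × ℝ) :
      localCoord t j q = ρ^[(j - i).val] (localCoord u i q - localCoord u i t) := by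
    rw [localCoord_sub_localCoord, ← localCoord_add, add_sub_cancel]
  have hdepth : (localCoord u i t).2 ≤ (localCoord u i v).2 := by
    rw [← hexNorm_localCoord u i, ← hexNorm_localCoord u i] at hle
    exact snd_le_snd_of_hexNorm_le hv ht hle
  have hu₀ : ρ^[(j - i).val] (-localCoord u i t) ∈ cone0 := by
    have h0 : localCoord u i u = 0 := by simp [localCoord, rot]
    simpa [cone, frame, h0] using hu
  apply mem_adjacent_cones_of_localCoord_snd_nonpos
  rw [frame]
  exact snd_iterate_rho_sub_nonpos hv ht hdepth (ZMod.val_lt _) hu₀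

theorem stmt17 (u v t : ℝ × ℝ) (i j : ZMod 6)
    (huv : u ≠ v) (hut : u ≠ t) (hvt : v ≠ t)
    (hv : v ∈ cone u i) (ht : t ∈ cone u i)
    (hle : hexNorm (v - u) ≤ hexNorm (t - u))
    (hu : u ∈ cone t j) :
    v ∈ cone t (j - 1) ∪ cone t j ∪ cone t (j + 1) :=
  stmt17_general u v t i j hv ht hle hu
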